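/- As z → ∞ in ℂ \ (−∞, 2], φ̃(z) + log z − 1/2 − (2 log(2z))/z² + (2 log 2)/z² → 0. -/

import Mathlib

open Real Filter Topology Complex

/-- The branch of `√(z²−4)` on `ℂ \ (−∞,2]`, written as `(z−2)^{1/2}(z+2)^{1/2}`
with principal branches. -/
noncomputable def sqrtZsqSub4 (z : ℂ) : ℂ :=
  (z - 2) ^ ((1 : ℂ) / 2) * (z + 2) ^ ((1 : ℂ) / 2)

/-- `φ̃(z) = (2/z²) log(z+√(z²−4)) − log(z+√(z²−4)) + (1 − 2/z²) log 2 + √(z²−4)/(2z)`. -/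
noncomputable def phiTilde (z : ℂ) : ℂ :=
  2 / z ^ 2 * Complex.log (z + sqrtZsqSub4 z) - Complex.log (z + sqrtZsqSub4 z)
    + (1 - 2 / z ^ 2) * (Real.log 2 : ℂ) + sqrtZsqSub4 z / (2 * z)

/-- The slit `(−∞, 2]` on the real axis. -/
def slit : Set ℂ := {z : ℂ | z.im = 0 ∧ z.re ≤ 2}

set_option linter.unusedVariables false


lemma my_arg_div {x y : ℂ} (hx : x ≠ 0) (hy : y ≠ 0) (hre : 0 < (x / y).re)
    (hsign : (0 ≤ x.im ∧ 0 ≤ y.im) ∨ (x.im < 0 ∧ y.im < 0)) :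
    Complex.arg (x / y) = Complex.arg x - Complex.arg y := by
  have hangle : (Complex.arg (x / y) : Real.Angle) = ((Complex.arg x - Complex.arg y : ℝ) : Real.Angle) := by
    rw [Real.Angle.coe_sub]; exact Complex.arg_div_coe_angle hx hy
  obtain ⟨k, hk⟩ := Real.Angle.angle_eq_iff_two_pi_dvd_sub.1 hangle
  have hu : |Complex.arg (x / y)| < π / 2 :=
    Complex.abs_arg_lt_pi_div_two_iff.2 (Or.inl hre)
  have hd : |Complex.arg x - Complex.arg y| ≤ π := by
    rcases hsign with ⟨h1, h2⟩ | ⟨h1, h2⟩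
    · have a1 : 0 ≤ Complex.arg x := Complex.arg_nonneg_iff.2 h1
      have a2 : 0 ≤ Complex.arg y := Complex.arg_nonneg_iff.2 h2
      have b1 := Complex.arg_le_pi x
      have b2 := Complex.arg_le_pi y
      rw [abs_le]; constructor <;> linarith
    · have a1 : Complex.arg x < 0 := Complex.arg_neg_iff.2 h1
      have a2 : Complex.arg y < 0 := Complex.arg_neg_iff.2 h2
      have b1 := Complex.neg_pi_lt_arg x
      have b2 := Complex.neg_pi_lt_arg y
      rw [abs_le]; constructor <;> linarith
  have hπ := Real.pi_pos
  have habs : |(2:ℝ) * π * k| < 2 * π := by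
    rw [← hk]
    calc |Complex.arg (x / y) - (Complex.arg x - Complex.arg y)|
        ≤ |Complex.arg (x / y)| + |Complex.arg x - Complex.arg y| := abs_sub _ _
      _ < 2 * π := by linarith
  have hk0 : k = 0 := by
    have h1 : |(k : ℝ)| < 1 := by
      rw [abs_mul, abs_of_pos (by positivity : (0:ℝ) < 2 * π)] at habs
      nlinarith [abs_nonneg (k:ℝ)]
    have h2 : |k| < 1 := by exact_mod_cast h1
    rwa [Int.abs_lt_one_iff] at h2
  rw [hk0] at hk
  push_cast at hk
  linarith [hk]

lemma my_log_div {x y : ℂ} (hx : x ≠ 0) (hy : y ≠ 0) (hre : 0 < (x / y).re)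
    (hsign : (0 ≤ x.im ∧ 0 ≤ y.im) ∨ (x.im < 0 ∧ y.im < 0)) :
    Complex.log (x / y) = Complex.log x - Complex.log y := by
  apply Complex.ext
  · simp only [Complex.log_re, Complex.sub_re, norm_div]
    exact Real.log_div (norm_ne_zero_iff.mpr hx) (norm_ne_zero_iff.mpr hy)
  · simp only [Complex.log_im, Complex.sub_im]
    exact my_arg_div hx hy hre hsign


lemma slit_ne {z : ℂ} (hz : z ∉ slit) : z - 2 ≠ 0 ∧ z + 2 ≠ 0 ∧ z ≠ 0 := by
  refine ⟨fun h => ?_, fun h => ?_, fun h => ?_⟩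
  · have : z = 2 := by linear_combination h
    exact hz (by simp [this, slit])
  · have : z = -2 := by linear_combination h
    exact hz (by simp [this, slit])
  · exact hz (by simp [h, slit])

lemma my_sqrt_eq_exp {z : ℂ} (hz : z ∉ slit) :
    sqrtZsqSub4 z =
      Complex.exp ((Complex.log (z - 2) + Complex.log (z + 2)) * (1 / 2)) := by
  obtain ⟨h1, h2, -⟩ := slit_ne hz
  rw [sqrtZsqSub4, Complex.cpow_def_of_ne_zero h1, Complex.cpow_def_of_ne_zero h2,
    ← Complex.exp_add, add_mul]

lemma im_sqrt {z : ℂ} (hz : z ∉ slit) :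
    (0 ≤ z.im → 0 ≤ (sqrtZsqSub4 z).im) ∧ (z.im < 0 → (sqrtZsqSub4 z).im < 0) := by
  obtain ⟨h1, h2, -⟩ := slit_ne hz
  rw [my_sqrt_eq_exp hz, Complex.exp_im]
  have him : ((Complex.log (z - 2) + Complex.log (z + 2)) * (1 / 2)).im
      = (Complex.arg (z - 2) + Complex.arg (z + 2)) / 2 := by
    simp [Complex.mul_im, Complex.add_im, Complex.log_im]
    ring
  rw [him]
  have e1 : (z - 2).im = z.im := by simp
  have e2 : (z + 2).im = z.im := by simp
  have hexp : 0 < Real.exp ((Complex.log (z - 2) + Complex.log (z + 2)) * (1 / 2)).re :=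
    Real.exp_pos _
  constructor
  · intro h0
    rcases eq_or_lt_of_le h0 with h0 | h0
    · -- z.im = 0, so z.re > 2, args are 0
      have hre : 2 < z.re := by
        by_contra hle
        exact hz ⟨h0.symm, le_of_not_gt hle⟩
      have a1 : Complex.arg (z - 2) = 0 := Complex.arg_eq_zero_iff.2 ⟨by simp; linarith, by simp [← h0]⟩
      have a2 : Complex.arg (z + 2) = 0 := Complex.arg_eq_zero_iff.2 ⟨by simp; linarith, by simp [← h0]⟩
      simp [a1, a2]
    · have a1 : 0 < Complex.arg (z - 2) := by
        rcases lt_or_eq_of_le (Complex.arg_nonneg_iff.2 (by rw [e1]; exact h0.le)) with h | h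
        · exact h
        · exfalso
          have := Complex.arg_eq_zero_iff.1 h.symm
          rw [e1] at this; linarith [this.2, h0]
      have a2 : 0 < Complex.arg (z + 2) := by
        rcases lt_or_eq_of_le (Complex.arg_nonneg_iff.2 (by rw [e2]; exact h0.le)) with h | h
        · exact h
        · exfalso
          have := Complex.arg_eq_zero_iff.1 h.symm
          rw [e2] at this; linarith [this.2, h0]
      have b1 : Complex.arg (z - 2) ≤ π := Complex.arg_le_pi _
      have b2 : Complex.arg (z + 2) ≤ π := Complex.arg_le_pi _
      have c1 : Complex.arg (z - 2) ≠ π := by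
        intro h; have := (Complex.arg_eq_pi_iff.1 h).2; rw [e1] at this; linarith
      have c2 : Complex.arg (z + 2) ≠ π := by
        intro h; have := (Complex.arg_eq_pi_iff.1 h).2; rw [e2] at this; linarith
      have : 0 < Real.sin ((Complex.arg (z - 2) + Complex.arg (z + 2)) / 2) := by
        apply Real.sin_pos_of_pos_of_lt_pi
        · linarith
        · rcases lt_of_le_of_ne b1 c1, lt_of_le_of_ne b2 c2 with ⟨d1, d2⟩
          linarith
      positivity
  · intro h0
    have a1 : Complex.arg (z - 2) < 0 := Complex.arg_neg_iff.2 (by rw [e1]; exact h0)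
    have a2 : Complex.arg (z + 2) < 0 := Complex.arg_neg_iff.2 (by rw [e2]; exact h0)
    have b1 := Complex.neg_pi_lt_arg (z - 2)
    have b2 := Complex.neg_pi_lt_arg (z + 2)
    have : Real.sin ((Complex.arg (z - 2) + Complex.arg (z + 2)) / 2) < 0 :=
      Real.sin_neg_of_neg_of_neg_pi_lt (by linarith) (by linarith)
    exact mul_neg_of_pos_of_neg hexp this


lemma re_pm {z : ℂ} (hbig : 3 ≤ ‖z‖) (w : ℂ) (hw : ‖w‖ ≤ 2) :
    0 < ((z + w) / z).re := by
  have hz0 : z ≠ 0 := by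
    intro h; rw [h] at hbig; simp at hbig; linarith
  have e : (z + w) / z = 1 + w / z := by field_simp
  rw [e, Complex.add_re, Complex.one_re]
  have h1 : ‖w / z‖ ≤ 2 / 3 := by
    rw [norm_div]
    exact div_le_div₀ (by norm_num) hw (by norm_num) hbig
  have h2 : |(w / z).re| ≤ 2 / 3 := le_trans (Complex.abs_re_le_norm _) h1
  have := (abs_le.1 h2).1
  linarith

lemma sdiv_eq {z : ℂ} (hz : z ∉ slit) (hbig : 3 ≤ ‖z‖) :
    sqrtZsqSub4 z / z =
      Complex.exp ((Complex.log ((z - 2) / z) + Complex.log ((z + 2) / z)) * (1 / 2)) := by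
  obtain ⟨h1, h2, hz0⟩ := slit_ne hz
  have hsign : (0 ≤ (z - 2).im ∧ 0 ≤ z.im) ∨ ((z - 2).im < 0 ∧ z.im < 0) := by
    rcases le_or_gt 0 z.im with h | h
    · exact Or.inl ⟨by simpa using h, h⟩
    · exact Or.inr ⟨by simpa using h, h⟩
  have hsign' : (0 ≤ (z + 2).im ∧ 0 ≤ z.im) ∨ ((z + 2).im < 0 ∧ z.im < 0) := by
    rcases le_or_gt 0 z.im with h | h
    · exact Or.inl ⟨by simpa using h, h⟩
    · exact Or.inr ⟨by simpa using h, h⟩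
  have hre1 : 0 < ((z - 2) / z).re := by
    have := re_pm hbig (-2) (by simp)
    simpa [sub_eq_add_neg] using this
  have hre2 : 0 < ((z + 2) / z).re := re_pm hbig 2 (by simp)
  rw [my_log_div h1 hz0 hre1 hsign, my_log_div h2 hz0 hre2 hsign', my_sqrt_eq_exp hz,
    show (Complex.log (z - 2) - Complex.log z + (Complex.log (z + 2) - Complex.log z)) * (1 / 2)
      = (Complex.log (z - 2) + Complex.log (z + 2)) * (1 / 2) - Complex.log z by ring,
    Complex.exp_sub, Complex.exp_log hz0]

noncomputable abbrev Ffil : Filter ℂ := Bornology.cobounded ℂ ⊓ Filter.principal slitᶜ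

lemma ev_slit : ∀ᶠ z in Ffil, z ∉ slit :=
  (Filter.eventually_principal.2 (fun z hz => hz)).filter_mono inf_le_right

lemma ev_big : ∀ᶠ z in Ffil, 3 ≤ ‖z‖ := by
  have := (tendsto_norm_cobounded_atTop (E := ℂ)).eventually_ge_atTop 3
  exact (this.mono fun z h => by exact h).filter_mono inf_le_left

lemma tendsto_inv_F : Tendsto (fun z : ℂ => z⁻¹) Ffil (𝓝 0) :=
  tendsto_inv₀_cobounded.mono_left inf_le_left

lemma tendsto_sdiv : Tendsto (fun z : ℂ => sqrtZsqSub4 z / z) Ffil (𝓝 1) := by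
  have hm : Tendsto (fun z : ℂ => (z - 2) / z) Ffil (𝓝 1) := by
    have h : Tendsto (fun z : ℂ => 1 - 2 * z⁻¹) Ffil (𝓝 (1 - 2 * 0)) :=
      tendsto_const_nhds.sub (tendsto_inv_F.const_mul 2)
    rw [show (1 : ℂ) - 2 * 0 = 1 by norm_num] at h
    apply h.congr'
    filter_upwards [ev_big] with z hb
    have hz0 : z ≠ 0 := by intro h; rw [h] at hb; simp at hb; linarith
    field_simp
  have hp : Tendsto (fun z : ℂ => (z + 2) / z) Ffil (𝓝 1) := by
    have h : Tendsto (fun z : ℂ => 1 + 2 * z⁻¹) Ffil (𝓝 (1 + 2 * 0)) :=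
      tendsto_const_nhds.add (tendsto_inv_F.const_mul 2)
    rw [show (1 : ℂ) + 2 * 0 = 1 by norm_num] at h
    apply h.congr'
    filter_upwards [ev_big] with z hb
    have hz0 : z ≠ 0 := by intro h; rw [h] at hb; simp at hb; linarith
    field_simp
  have hone : (1 : ℂ) ∈ Complex.slitPlane := by simp [Complex.slitPlane]
  have hlm : Tendsto (fun z : ℂ => Complex.log ((z - 2) / z)) Ffil (𝓝 0) := by
    have := hm.clog hone
    rwa [Complex.log_one] at this
  have hlp : Tendsto (fun z : ℂ => Complex.log ((z + 2) / z)) Ffil (𝓝 0) := by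
    have := hp.clog hone
    rwa [Complex.log_one] at this
  have hexp : Tendsto (fun z : ℂ =>
      Complex.exp ((Complex.log ((z - 2) / z) + Complex.log ((z + 2) / z)) * (1 / 2)))
      Ffil (𝓝 1) := by
    have h := ((hlm.add hlp).mul_const (1 / 2 : ℂ))
    rw [show ((0 : ℂ) + 0) * (1 / 2) = 0 by norm_num] at h
    have := (Complex.continuous_exp.continuousAt (x := 0)).tendsto.comp h
    rwa [Complex.exp_zero] at this
  apply hexp.congr'
  filter_upwards [ev_slit, ev_big] with z hs hb
  exact (sdiv_eq hs hb).symm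

lemma key_eq {z : ℂ} (hz : z ∉ slit) (hbig : 3 ≤ ‖z‖)
    (habs : ‖sqrtZsqSub4 z / z - 1‖ < 1 / 2) :
    phiTilde z + Complex.log z - 1 / 2 - 2 * Complex.log (2 * z) / z ^ 2
      + 2 * (Real.log 2 : ℂ) / z ^ 2
    = (2 / z ^ 2 - 1) * Complex.log ((z + sqrtZsqSub4 z) / (2 * z))
      + (sqrtZsqSub4 z / z - 1) / 2 := by
  obtain ⟨-, -, hz0⟩ := slit_ne hz
  set S := sqrtZsqSub4 z with hSdef
  have hzS : z + S ≠ 0 := by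
    intro h
    have hSz : S / z - 1 = -2 := by
      have hS : S = -z := by linear_combination h
      rw [hS, neg_div, div_self hz0]; ring
    rw [hSz] at habs
    rw [show (-2 : ℂ) = ((-2 : ℝ) : ℂ) by norm_num, Complex.norm_real, Real.norm_eq_abs] at habs
    norm_num at habs
  have h2z0 : (2 : ℂ) * z ≠ 0 := mul_ne_zero two_ne_zero hz0
  have him2z : ((2 : ℂ) * z).im = 2 * z.im := by
    simp [Complex.mul_im]
  have hre : 0 < ((z + S) / (2 * z)).re := by
    have e : (z + S) / (2 * z) = 1 + (S / z - 1) * (1 / 2 : ℂ) := by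
      field_simp; ring
    rw [e, Complex.add_re, Complex.one_re]
    have hr : ((S / z - 1) * (1 / 2 : ℂ)).re = (S / z - 1).re * (1 / 2) := by
      simp [Complex.mul_re]
    rw [hr]
    have h2 := (abs_le.1 (le_trans (Complex.abs_re_le_norm _) habs.le)).1
    linarith
  have hsign : (0 ≤ (z + S).im ∧ 0 ≤ ((2 : ℂ) * z).im) ∨
      ((z + S).im < 0 ∧ ((2 : ℂ) * z).im < 0) := by
    rcases le_or_gt 0 z.im with h | h
    · left
      have hi := (im_sqrt hz).1 h
      constructor
      · rw [Complex.add_im]; linarith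
      · rw [him2z]; linarith
    · right
      have hi := (im_sqrt hz).2 h
      constructor
      · rw [Complex.add_im]; linarith
      · rw [him2z]; linarith
  have hlogu : Complex.log ((z + S) / (2 * z))
      = Complex.log (z + S) - Complex.log (2 * z) := my_log_div hzS h2z0 hre hsign
  have hlog2 : Complex.log (2 * z) = (Real.log 2 : ℂ) + Complex.log z := by
    have hd : ((2 : ℂ) * z) / z = 2 := by
      rw [mul_div_assoc, div_self hz0, mul_one]
    have hre2 : 0 < (((2 : ℂ) * z) / z).re := by
      rw [hd]; norm_num
    have hsign2 : (0 ≤ ((2 : ℂ) * z).im ∧ 0 ≤ z.im) ∨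
        (((2 : ℂ) * z).im < 0 ∧ z.im < 0) := by
      rcases le_or_gt 0 z.im with h | h
      · left; exact ⟨by rw [him2z]; linarith, h⟩
      · right; exact ⟨by rw [him2z]; linarith, h⟩
    have hml := my_log_div h2z0 hz0 hre2 hsign2
    rw [hd] at hml
    have h2 : Complex.log 2 = (Real.log 2 : ℂ) := by
      rw [Complex.ofReal_log (by norm_num : (0 : ℝ) ≤ 2)]
      norm_num
    rw [h2] at hml
    linear_combination -hml
  rw [hlogu, hlog2]
  simp only [phiTilde, ← hSdef]
  ring


/-- As `z → ∞` in `ℂ \ (−∞, 2]`,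
`φ̃(z) + log z − 1/2 − (2 log(2z))/z² + (2 log 2)/z² → 0`. -/
theorem phiTilde_asymptotics_at_infinity :
    Tendsto (fun z : ℂ => phiTilde z + Complex.log z - 1 / 2
        - 2 * Complex.log (2 * z) / z ^ 2 + 2 * (Real.log 2 : ℂ) / z ^ 2)
      (Bornology.cobounded ℂ ⊓ Filter.principal slitᶜ) (𝓝 0) := by
  have h1 := tendsto_sdiv
  have hone : (1 : ℂ) ∈ Complex.slitPlane := by simp [Complex.slitPlane]
  have hB : Tendsto (fun z : ℂ => (sqrtZsqSub4 z / z - 1) / 2) Ffil (𝓝 0) := by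
    have := (h1.sub_const 1).div_const (2 : ℂ)
    simpa using this
  have hu : Tendsto (fun z : ℂ => (z + sqrtZsqSub4 z) / (2 * z)) Ffil (𝓝 1) := by
    have h : Tendsto (fun z : ℂ => 1 + (sqrtZsqSub4 z / z - 1) * (1 / 2 : ℂ))
        Ffil (𝓝 (1 + (1 - 1) * (1 / 2))) :=
      tendsto_const_nhds.add ((h1.sub_const 1).mul_const _)
    rw [show (1 : ℂ) + (1 - 1) * (1 / 2) = 1 by norm_num] at h
    apply h.congr'
    filter_upwards [ev_big] with z hb
    have hz0 : z ≠ 0 := by intro h0; rw [h0] at hb; simp at hb; linarith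
    field_simp; ring
  have hlogu : Tendsto (fun z : ℂ => Complex.log ((z + sqrtZsqSub4 z) / (2 * z)))
      Ffil (𝓝 0) := by
    have := hu.clog hone
    rwa [Complex.log_one] at this
  have hcoef : Tendsto (fun z : ℂ => 2 / z ^ 2 - 1) Ffil (𝓝 (-1)) := by
    have h : Tendsto (fun z : ℂ => 2 * (z⁻¹ * z⁻¹) - 1) Ffil (𝓝 (2 * ((0 : ℂ) * 0) - 1)) :=
      ((tendsto_inv_F.mul tendsto_inv_F).const_mul 2).sub_const 1
    rw [show (2 : ℂ) * ((0 : ℂ) * 0) - 1 = -1 by norm_num] at h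
    exact h.congr fun z => by rw [sq, div_eq_mul_inv, mul_inv]
  have hev : ∀ᶠ z in Ffil, ‖sqrtZsqSub4 z / z - 1‖ < 1 / 2 := by
    have := h1 (Metric.ball_mem_nhds (1 : ℂ) (by norm_num : (0 : ℝ) < 1 / 2))
    filter_upwards [this] with z hz
    rw [Set.mem_preimage, Metric.mem_ball, Complex.dist_eq] at hz
    exact hz
  have hmain : Tendsto (fun z : ℂ => (2 / z ^ 2 - 1)
      * Complex.log ((z + sqrtZsqSub4 z) / (2 * z))
      + (sqrtZsqSub4 z / z - 1) / 2) Ffil (𝓝 0) := by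
    have := (hcoef.mul hlogu).add hB
    simpa using this
  apply hmain.congr'
  filter_upwards [ev_slit, ev_big, hev] with z hs hb ha
  exact (key_eq hs hb ha).symm
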